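/- arXiv:1901.03316 — 5 statements merged into one kernel-verified Lean document; each statement's English description precedes it below -/
import Mathlib

section
/- Let n ≥ 1, ρ > 0, and 0 ≤ C < 1. Let F : ℝⁿ → ℝⁿ be continuously differentiable on the open ball B_ρ(0) ⊆ ℝⁿ with F(0) = 0 and with the operator norm of the derivative satisfying ‖DF(x)‖ ≤ C for all x ∈ B_ρ(0). Equip ℝⁿ × ℝⁿ with the Euclidean norm ‖(x,y)‖² = ‖x‖² + ‖y‖². Then the set G = { (x, F(x)) : x ∈ B_ρ(0) and ‖x‖² + ‖F(x)‖² < ρ² } ⊆ ℝⁿ × ℝⁿ is connected. -/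
/-!
The base of the graph, `S = {x ∈ B_ρ(0) | ‖x‖² + ‖F x‖² < ρ²}`, is star-shaped about `0`. Indeed,
`‖F x‖ ≤ C ‖x‖` by the mean value inequality, so along a ray the derivative of
`t ↦ ‖t y‖² + ‖F (t y)‖²` is `2 t ‖y‖² + 2 ⟪F (t y), DF(t y) y⟫ ≥ 2 t ‖y‖² (1 - C²) ≥ 0`.
The graph is then the continuous image of the path-connected set `S`.
-/

open Metric Set
open scoped RealInnerProductSpace

theorem norm_le_mul_norm_of_norm_fderiv_le {E G : Type*} [NormedAddCommGroup E] [NormedSpace ℝ E]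
    [NormedAddCommGroup G] [NormedSpace ℝ G] {f : E → G} {ρ C : ℝ}
    (hf : DifferentiableOn ℝ f (ball 0 ρ))
    (hDf : ∀ x ∈ ball 0 ρ, ‖fderiv ℝ f x‖ ≤ C) (hf0 : f 0 = 0) {x : E} (hx : x ∈ ball 0 ρ) :
    ‖f x‖ ≤ C * ‖x‖ := by
  simpa [hf0] using (convex_ball 0 ρ).norm_image_sub_le_of_norm_fderiv_le
    (fun z hz ↦ hf.differentiableAt (isOpen_ball.mem_nhds hz)) hDf
    (mem_ball_self (pos_of_mem_ball hx)) hx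

section RadialMonotonicity

variable {E G : Type*} [NormedAddCommGroup E] [InnerProductSpace ℝ E]
  [NormedAddCommGroup G] [InnerProductSpace ℝ G] {f : E → G} {ρ C : ℝ}

theorem HasFDerivAt.hasDerivAt_norm_sq_add_norm_sq_comp_smul {f' : E →L[ℝ] G} {y : E} {t : ℝ}
    (hf : HasFDerivAt f f' (t • y)) :
    HasDerivAt (fun s : ℝ ↦ ‖s • y‖ ^ 2 + ‖f (s • y)‖ ^ 2)
      (2 * (t * ‖y‖ ^ 2) + 2 * ⟪f (t • y), f' y⟫) t := by
  have hray : HasDerivAt (fun s : ℝ ↦ s • y) y t := by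
    simpa using (hasDerivAt_id t).smul_const y
  have h := hray.norm_sq.add (hf.comp_hasDerivAt t hray).norm_sq
  rwa [real_inner_smul_left, real_inner_self_eq_norm_sq] at h

theorem monotoneOn_norm_sq_add_norm_sq_comp_smul (hf : DifferentiableOn ℝ f (ball 0 ρ))
    (hDf : ∀ x ∈ ball 0 ρ, ‖fderiv ℝ f x‖ ≤ C) (hf0 : f 0 = 0) (hC0 : 0 ≤ C) (hC1 : C ≤ 1)
    {y : E} (hy : y ∈ ball 0 ρ) :
    MonotoneOn (fun t : ℝ ↦ ‖t • y‖ ^ 2 + ‖f (t • y)‖ ^ 2) (Icc 0 1) := by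
  have hray : ∀ t ∈ Icc (0 : ℝ) 1, t • y ∈ ball 0 ρ := fun t ht ↦
    (convex_ball 0 ρ).smul_mem_of_zero_mem (mem_ball_self (pos_of_mem_ball hy)) hy ht
  have hderiv : ∀ t ∈ Icc (0 : ℝ) 1, HasDerivAt (fun s : ℝ ↦ ‖s • y‖ ^ 2 + ‖f (s • y)‖ ^ 2)
      (2 * (t * ‖y‖ ^ 2) + 2 * ⟪f (t • y), fderiv ℝ f (t • y) y⟫) t := fun t ht ↦
    (hf.differentiableAt (isOpen_ball.mem_nhds (hray t ht))).hasFDerivAt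
      |>.hasDerivAt_norm_sq_add_norm_sq_comp_smul
  refine monotoneOn_of_hasDerivWithinAt_nonneg (convex_Icc 0 1)
    (fun t ht ↦ (hderiv t ht).continuousAt.continuousWithinAt)
    (fun t ht ↦ (hderiv t (interior_subset ht)).hasDerivWithinAt) fun t ht ↦ ?_
  rw [interior_Icc] at ht
  have ht0 : 0 ≤ t := ht.1.le
  have hft : ‖f (t • y)‖ ≤ C * (t * ‖y‖) := by
    simpa [norm_smul, abs_of_nonneg ht0] using
      norm_le_mul_norm_of_norm_fderiv_le hf hDf hf0 (hray t (Ioo_subset_Icc_self ht))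
  have hf'y : ‖fderiv ℝ f (t • y) y‖ ≤ C * ‖y‖ :=
    (ContinuousLinearMap.le_opNorm _ _).trans
      (by gcongr; exact hDf _ (hray t (Ioo_subset_Icc_self ht)))
  have hinner : -(C * (t * ‖y‖) * (C * ‖y‖)) ≤ ⟪f (t • y), fderiv ℝ f (t • y) y⟫ :=
    neg_le_of_abs_le <| (abs_real_inner_le_norm _ _).trans <|
      mul_le_mul hft hf'y (norm_nonneg _) (by positivity)
  have hC2 : C * C ≤ 1 := by nlinarith
  nlinarith [mul_nonneg ht0 (sq_nonneg ‖y‖)]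

theorem starConvex_zero_setOf_norm_sq_add_norm_sq_lt (hf : DifferentiableOn ℝ f (ball 0 ρ))
    (hDf : ∀ x ∈ ball 0 ρ, ‖fderiv ℝ f x‖ ≤ C) (hf0 : f 0 = 0) (hC0 : 0 ≤ C) (hC1 : C ≤ 1)
    (r : ℝ) : StarConvex ℝ 0 {x ∈ ball 0 ρ | ‖x‖ ^ 2 + ‖f x‖ ^ 2 < r} := by
  refine starConvex_zero_iff.2 fun y ⟨hy, hyr⟩ t ht0 ht1 ↦ ⟨?_, ?_⟩
  · exact (convex_ball 0 ρ).smul_mem_of_zero_mem (mem_ball_self (pos_of_mem_ball hy)) hy ⟨ht0, ht1⟩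
  · refine lt_of_le_of_lt ?_ hyr
    simpa using monotoneOn_norm_sq_add_norm_sq_comp_smul hf hDf hf0 hC0 hC1 hy
      ⟨ht0, ht1⟩ (right_mem_Icc.2 zero_le_one) ht1

end RadialMonotonicity

theorem graph_inter_ball_isConnected_general
    (n : ℕ) (ρ C : ℝ) (hρ : 0 < ρ) (hC0 : 0 ≤ C) (hC1 : C < 1)
    (F : EuclideanSpace ℝ (Fin n) → EuclideanSpace ℝ (Fin n))
    (hF : ContDiffOn ℝ 1 F (ball 0 ρ)) (hF0 : F 0 = 0)
    (hDF : ∀ x ∈ ball (0 : EuclideanSpace ℝ (Fin n)) ρ, ‖fderiv ℝ F x‖ ≤ C) :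
    IsConnected {p : EuclideanSpace ℝ (Fin n) × EuclideanSpace ℝ (Fin n) |
      p.1 ∈ ball (0 : EuclideanSpace ℝ (Fin n)) ρ ∧ p.2 = F p.1 ∧
        ‖p.1‖ ^ 2 + ‖F p.1‖ ^ 2 < ρ ^ 2} := by
  set S := {x ∈ ball (0 : EuclideanSpace ℝ (Fin n)) ρ | ‖x‖ ^ 2 + ‖F x‖ ^ 2 < ρ ^ 2}
  have hS : IsConnected S := by
    refine (starConvex_zero_setOf_norm_sq_add_norm_sq_lt (hF.differentiableOn one_ne_zero)
      hDF hF0 hC0 hC1.le _).isPathConnected ⟨mem_ball_self hρ, ?_⟩ |>.isConnected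
    simpa [hF0] using pow_pos hρ 2
  have hgraph : {p : EuclideanSpace ℝ (Fin n) × EuclideanSpace ℝ (Fin n) |
      p.1 ∈ ball 0 ρ ∧ p.2 = F p.1 ∧ ‖p.1‖ ^ 2 + ‖F p.1‖ ^ 2 < ρ ^ 2} = S.graphOn F := by
    ext p
    constructor
    · rintro ⟨hx, hp, hxρ⟩
      exact ⟨p.1, ⟨hx, hxρ⟩, Prod.ext rfl hp.symm⟩
    · rintro ⟨x, ⟨hx, hxρ⟩, rfl⟩
      exact ⟨hx, rfl, hxρ⟩
  rw [hgraph]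
  exact hS.image _ (continuousOn_id.prodMk (hF.continuousOn.mono fun _ hx ↦ hx.1))

/-- Let `F : ℝⁿ → ℝⁿ` be `C¹` on `B_ρ(0)` with `F(0) = 0` and `‖DF‖ ≤ C < 1` there. Then
the portion of the graph of `F` inside the Euclidean ball of radius `ρ` in `ℝⁿ × ℝⁿ`,
i.e. `{(x, F x) : x ∈ B_ρ(0), ‖x‖² + ‖F x‖² < ρ²}`, is connected. -/
theorem graph_inter_ball_isConnected
    (n : ℕ) (hn : 1 ≤ n) (ρ C : ℝ) (hρ : 0 < ρ) (hC0 : 0 ≤ C) (hC1 : C < 1)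
    (F : EuclideanSpace ℝ (Fin n) → EuclideanSpace ℝ (Fin n))
    (hF : ContDiffOn ℝ 1 F (ball 0 ρ)) (hF0 : F 0 = 0)
    (hDF : ∀ x ∈ ball (0 : EuclideanSpace ℝ (Fin n)) ρ, ‖fderiv ℝ F x‖ ≤ C) :
    IsConnected {p : EuclideanSpace ℝ (Fin n) × EuclideanSpace ℝ (Fin n) |
      p.1 ∈ ball (0 : EuclideanSpace ℝ (Fin n)) ρ ∧ p.2 = F p.1 ∧
        ‖p.1‖ ^ 2 + ‖F p.1‖ ^ 2 < ρ ^ 2} :=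
  graph_inter_ball_isConnected_general n ρ C hρ hC0 hC1 F hF hF0 hDF
end

section
/- Let M be a Hausdorff topological space and ι : M → ℝ^d a continuous proper map that is locally injective (every point of M has an open neighborhood on which ι is injective). Then the fiber-counting function y ↦ card(ι⁻¹({y})), taking values in ℕ, is upper semicontinuous on ℝ^d: for every y ∈ ℝ^d there is an open neighborhood W of y such that card(ι⁻¹({y'})) ≤ card(ι⁻¹({y})) for all y' ∈ W. -/
/-- For a continuous, proper, locally injective map `ι : M → ℝᵈ` with `M` Hausdorff,
the fiber-counting function `y ↦ card (ι⁻¹{y})` is upper semicontinuous: every `y` has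
an open neighborhood `W` on which the fiber cardinality does not exceed that at `y`. -/
theorem fiberCount_upperSemicontinuous
    {d : ℕ} {M : Type*} [TopologicalSpace M] [T2Space M]
    (ι : M → EuclideanSpace ℝ (Fin d))
    (hcont : Continuous ι)
    (hproper : ∀ K : Set (EuclideanSpace ℝ (Fin d)), IsCompact K → IsCompact (ι ⁻¹' K))
    (hlocinj : ∀ x : M, ∃ U : Set M, IsOpen U ∧ x ∈ U ∧ Set.InjOn ι U) :
    ∀ y : EuclideanSpace ℝ (Fin d), ∃ W : Set (EuclideanSpace ℝ (Fin d)),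
      IsOpen W ∧ y ∈ W ∧ ∀ y' ∈ W, (ι ⁻¹' {y'}).ncard ≤ (ι ⁻¹' {y}).ncard := by
  intro y
  -- ι is a proper map, hence closed
  have hPM : IsProperMap ι :=
    (isProperMap_iff_isCompact_preimage).2 ⟨hcont, hproper⟩
  have hclosed : IsClosedMap ι := hPM.isClosedMap
  set F : Set M := ι ⁻¹' {y} with hF
  have hFc : IsCompact F := hproper {y} isCompact_singleton
  -- choose for each x an open injectivity neighborhood
  choose U hUopen hUmem hUinj using hlocinj
  -- F is finite
  have hFfin : F.Finite := by
    obtain ⟨t, htsub, htfin, htcov⟩ := hFc.elim_finite_subcover_image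
      (fun x (_ : x ∈ F) => hUopen x) (fun x hx => Set.mem_biUnion hx (hUmem x))
    have hsub : F ⊆ t := by
      intro z hz
      obtain ⟨x, hxt, hzU⟩ := Set.mem_iUnion₂.1 (htcov hz)
      have hxF : x ∈ F := htsub hxt
      have : z = x := hUinj x (hzU) (hUmem x) (by
        have hz' : ι z = y := hz
        have hx' : ι x = y := hxF
        rw [hz', hx'])
      subst this
      exact hxt
    exact htfin.subset hsub
  -- Open set U covering F
  set V : Set M := ⋃ x ∈ F, U x with hV
  have hVopen : IsOpen V := isOpen_biUnion (fun x _ => by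
    exact hUopen x) |>.mono (le_refl _)
  have hFsubV : F ⊆ V := fun x hx => Set.mem_biUnion hx (hUmem x)
  -- the image of the complement is closed and misses y
  have hCclosed : IsClosed (ι '' Vᶜ) := hclosed _ hVopen.isClosed_compl
  have hyC : y ∉ ι '' Vᶜ := by
    rintro ⟨z, hz, rfl⟩
    exact hz (hFsubV rfl)
  refine ⟨(ι '' Vᶜ)ᶜ, hCclosed.isOpen_compl, hyC, ?_⟩
  intro y' hy'
  -- every point of the fiber over y' lies in V
  have hfib : ι ⁻¹' {y'} ⊆ V := by
    intro z hz
    by_contra hzV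
    exact hy' ⟨z, hzV, hz⟩
  -- injection from fiber over y' into F
  classical
  have key : ∀ z ∈ ι ⁻¹' {y'}, ∃ x ∈ F, z ∈ U x := by
    intro z hz
    obtain ⟨x, hxF, hzU⟩ := Set.mem_iUnion₂.1 (hfib hz)
    exact ⟨x, hxF, hzU⟩
  set f : M → M := fun z => if h : ∃ x ∈ F, z ∈ U x then h.choose else z with hf
  have hfF : ∀ z ∈ ι ⁻¹' {y'}, f z ∈ F ∧ z ∈ U (f z) := by
    intro z hz
    have h := key z hz
    simp only [hf, dif_pos h]
    exact ⟨h.choose_spec.1, h.choose_spec.2⟩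
  apply Set.ncard_le_ncard_of_injOn f (fun z hz => (hfF z hz).1) _ hFfin
  intro z₁ h₁ z₂ h₂ hfz
  have hz₁ := (hfF z₁ h₁).2
  have hz₂ := (hfF z₂ h₂).2
  rw [hfz] at hz₁
  exact hUinj (f z₂) hz₁ hz₂ (by
    have e₁ : ι z₁ = y' := h₁
    have e₂ : ι z₂ = y' := h₂
    rw [e₁, e₂])
end

section
/- Let M be a nonempty Hausdorff topological space and ι : M → ℝ^d a continuous proper map that is locally injective (every point of M has an open neighborhood on which ι is injective). Define m : M → ℕ by m(x) = card(ι⁻¹({ι(x)})), and let m₁ = inf_{x ∈ M} m(x). Then the set O₁ = { x ∈ M : m(x) = m₁ } is open and nonempty. -/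
open Set

/-- For a continuous, proper, locally injective map `ι : M → ℝᵈ` from a nonempty Hausdorff
space `M`, with `m(x) = card (ι⁻¹{ι x})` and `m₁ = ⨅ x, m x`, the set `O₁ = {x | m x = m₁}`
is open and nonempty. -/
theorem minimal_fiberCount_set_isOpen_nonempty
    {d : ℕ} {M : Type*} [TopologicalSpace M] [T2Space M] [Nonempty M]
    (ι : M → EuclideanSpace ℝ (Fin d))
    (hcont : Continuous ι)
    (hproper : ∀ K : Set (EuclideanSpace ℝ (Fin d)), IsCompact K → IsCompact (ι ⁻¹' K))
    (hlocinj : ∀ x : M, ∃ U : Set M, IsOpen U ∧ x ∈ U ∧ Set.InjOn ι U)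
    (m : M → ℕ) (hm : ∀ x, m x = (ι ⁻¹' {ι x}).ncard)
    (m₁ : ℕ) (hm₁ : m₁ = ⨅ x : M, m x) :
    IsOpen {x : M | m x = m₁} ∧ {x : M | m x = m₁}.Nonempty := by
  classical
  choose U hUopen hUmem hUinj using hlocinj
  -- proper map, hence closed
  have hprop : IsProperMap ι := by
    rw [isProperMap_iff_isCompact_preimage]
    exact ⟨hcont, hproper⟩
  have hclosed : IsClosedMap ι := hprop.isClosedMap
  -- fibers are finite
  have hfin : ∀ y : EuclideanSpace ℝ (Fin d), (ι ⁻¹' {y}).Finite := by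
    intro y
    have hK : IsCompact (ι ⁻¹' {y}) := hproper _ isCompact_singleton
    have hcover : ι ⁻¹' {y} ⊆ ⋃ z ∈ ι ⁻¹' {y}, U z := fun z hz =>
      mem_biUnion hz (hUmem z)
    obtain ⟨t, hts, htfin, htcover⟩ :=
      hK.elim_finite_subcover_image (fun z _ => hUopen z) hcover
    refine htfin.subset ?_
    intro z hz
    obtain ⟨w, hw, hzw⟩ := mem_iUnion₂.mp (htcover hz)
    have hzy : ι z = y := hz
    have hwy : ι w = y := hts hw
    have : z = w := hUinj w hzw (hUmem w) (hzy.trans hwy.symm)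
    exact this ▸ hw
  -- local bound: near x, m ≤ m x
  have key : ∀ x : M, ∃ V : Set M, IsOpen V ∧ x ∈ V ∧ ∀ x' ∈ V, m x' ≤ m x := by
    intro x
    set F := ι ⁻¹' {ι x} with hF
    have hFfin : F.Finite := hfin (ι x)
    set S : Set M := ⋃ z ∈ F, U z with hS
    have hSopen : IsOpen S := isOpen_biUnion fun z _ => hUopen z
    have hCclosed : IsClosed (ι '' Sᶜ) := hclosed _ hSopen.isClosed_compl
    set V : Set M := U x ∩ ι ⁻¹' (ι '' Sᶜ)ᶜ with hV
    have hVopen : IsOpen V :=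
      (hUopen x).inter (hCclosed.isOpen_compl.preimage hcont)
    have hxV : x ∈ V := by
      refine ⟨hUmem x, ?_⟩
      intro hmem
      obtain ⟨z, hz, hzx⟩ := hmem
      exact hz (mem_biUnion (show z ∈ F from hzx) (hUmem z))
    refine ⟨V, hVopen, hxV, ?_⟩
    intro x' hx'
    rw [hm x', hm x]
    -- every point of the fiber of x' lies in S
    have hsub : ι ⁻¹' {ι x'} ⊆ S := by
      intro z hz
      by_contra hzS
      exact hx'.2 ⟨z, hzS, hz⟩
    set f : M → M := fun z =>
      if h : ∃ w ∈ F, z ∈ U w then h.choose else x with hf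
    apply Set.ncard_le_ncard_of_injOn f ?_ ?_ hFfin
    · intro z hz
      have : ∃ w ∈ F, z ∈ U w := by
        obtain ⟨w, hw, hzw⟩ := mem_iUnion₂.mp (hsub hz)
        exact ⟨w, hw, hzw⟩
      simp only [hf, dif_pos this]
      exact this.choose_spec.1
    · intro z₁ hz₁ z₂ hz₂ hfz
      have h1 : ∃ w ∈ F, z₁ ∈ U w := by
        obtain ⟨w, hw, hzw⟩ := mem_iUnion₂.mp (hsub hz₁); exact ⟨w, hw, hzw⟩
      have h2 : ∃ w ∈ F, z₂ ∈ U w := by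
        obtain ⟨w, hw, hzw⟩ := mem_iUnion₂.mp (hsub hz₂); exact ⟨w, hw, hzw⟩
      rw [hf] at hfz
      simp only [dif_pos h1, dif_pos h2] at hfz
      have hm1 : z₁ ∈ U h1.choose := h1.choose_spec.2
      have hm2 : z₂ ∈ U h1.choose := hfz ▸ h2.choose_spec.2
      exact hUinj h1.choose hm1 hm2 ((show ι z₁ = ι x' from hz₁).trans
        (show ι z₂ = ι x' from hz₂).symm)
  -- m₁ is the attained minimum
  have hlow : ∀ x, m₁ ≤ m x := by
    intro x
    rw [hm₁]
    exact Nat.sInf_le ⟨x, rfl⟩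
  have hex : ∃ x, m x = m₁ := by
    have : m₁ ∈ Set.range m := by
      rw [hm₁]
      exact Nat.sInf_mem (Set.range_nonempty m)
    obtain ⟨x, hx⟩ := this
    exact ⟨x, hx⟩
  constructor
  · rw [isOpen_iff_forall_mem_open]
    intro x hx
    obtain ⟨V, hVopen, hxV, hVle⟩ := key x
    refine ⟨V, ?_, hVopen, hxV⟩
    intro x' hx'
    exact le_antisymm ((hVle x' hx').trans_eq hx) (hlow x')
  · obtain ⟨x, hx⟩ := hex
    exact ⟨x, hx⟩
end

section
/- Let N be a compact subset of ℝ^d, let k ≥ 0, α > 0, C₂ > 0, C₃ > 0, and ε > 0. Assume: (i) ℋ^k(N) < ∞; (ii) the local noncollapsing property ℋ^k(N ∩ B_ε(x)) ≥ C₃·ε^k for every x ∈ N; (iii) μ is a measure on ℝ^d with μ(B_{3ε}(y)) ≤ C₂·(3ε)^{k+α} for every y ∈ N. Then the ε-neighborhood U_ε = { p ∈ ℝ^d : dist(p, N) < ε } satisfies μ(U_ε) ≤ (ℋ^k(N)/C₃)·C₂·3^{k+α}·ε^α. -/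
open MeasureTheory Metric
open scoped ENNReal NNReal

/-- Volume estimate for the `ε`-neighborhood of a compact set `N ⊆ ℝᵈ` of finite
`k`-dimensional Hausdorff measure satisfying the local `k`-noncollapsing property,
for a measure `μ` whose `3ε`-balls centered on `N` have volume at most `C₂ (3ε)^{k+α}`:
`μ(U_ε) ≤ (ℋᵏ(N)/C₃) · C₂ · 3^{k+α} · ε^α`. -/
theorem measure_neighborhood_le_of_noncollapsing
    {d : ℕ} (N : Set (EuclideanSpace ℝ (Fin d))) (hN : IsCompact N)
    (k α C₂ C₃ ε : ℝ) (hk : 0 ≤ k) (hα : 0 < α) (hC₂ : 0 < C₂) (hC₃ : 0 < C₃) (hε : 0 < ε)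
    (hfin : μH[k] N < ⊤)
    (hnc : ∀ x ∈ N, ENNReal.ofReal (C₃ * ε ^ k) ≤ μH[k] (N ∩ ball x ε))
    (μ : Measure (EuclideanSpace ℝ (Fin d)))
    (hμ : ∀ y ∈ N, μ (ball y (3 * ε)) ≤ ENNReal.ofReal (C₂ * (3 * ε) ^ (k + α))) :
    μ {p | ∃ q ∈ N, dist p q < ε} ≤
      μH[k] N / ENNReal.ofReal C₃ * ENNReal.ofReal (C₂ * 3 ^ (k + α) * ε ^ α) := by
  classical
  set H := μH[k] N with hH
  have hεk : (0:ℝ) < ε ^ k := Real.rpow_pos_of_pos hε k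
  have haR : (0:ℝ) < C₃ * ε ^ k := mul_pos hC₃ hεk
  set a : ℝ≥0∞ := ENNReal.ofReal (C₃ * ε ^ k) with haDef
  have ha0 : a ≠ 0 := by
    simp [haDef, ENNReal.ofReal_eq_zero, not_le, haR]
  have haT : a ≠ ⊤ := ENNReal.ofReal_ne_top
  -- packing bound for 2ε-separated finite subsets of N
  have key : ∀ t : Finset (EuclideanSpace ℝ (Fin d)), (↑t : Set (EuclideanSpace ℝ (Fin d))) ⊆ N →
      ((↑t : Set (EuclideanSpace ℝ (Fin d))).Pairwise fun x y => 2 * ε ≤ dist x y) →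
      (t.card : ℝ≥0∞) * a ≤ H := by
    intro t hts hsep
    have hdisj : (↑t : Set (EuclideanSpace ℝ (Fin d))).PairwiseDisjoint fun x => N ∩ ball x ε := by
      intro x hx y hy hxy
      have hb : Disjoint (ball x ε) (ball y ε) := by
        apply ball_disjoint_ball
        have := hsep hx hy hxy
        linarith
      exact (hb.mono inf_le_right inf_le_right)
    have hmeas : ∀ x ∈ t, MeasurableSet (N ∩ ball x ε) := fun x _ =>
      hN.measurableSet.inter measurableSet_ball
    calc (t.card : ℝ≥0∞) * a = ∑ _x ∈ t, a := by
          rw [Finset.sum_const, nsmul_eq_mul]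
      _ ≤ ∑ x ∈ t, μH[k] (N ∩ ball x ε) :=
          Finset.sum_le_sum fun x hx => hnc x (hts hx)
      _ = μH[k] (⋃ x ∈ t, N ∩ ball x ε) :=
          (measure_biUnion_finset hdisj hmeas).symm
      _ ≤ H := measure_mono (by
          intro p hp
          simp only [Set.mem_iUnion] at hp
          obtain ⟨x, _, hpx, _⟩ := hp
          exact hpx)
  have cardbound : ∀ t : Finset (EuclideanSpace ℝ (Fin d)), (↑t : Set (EuclideanSpace ℝ (Fin d))) ⊆ N →
      ((↑t : Set (EuclideanSpace ℝ (Fin d))).Pairwise fun x y => 2 * ε ≤ dist x y) →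
      (t.card : ℝ≥0∞) ≤ H / a := fun t h1 h2 =>
    (ENNReal.le_div_iff_mul_le (Or.inl ha0) (Or.inl haT)).2 (key t h1 h2)
  have hHa_lt : H / a < ⊤ := ENNReal.div_lt_top hfin.ne ha0
  -- natural number bound on cardinalities
  set M : ℕ := ⌊(H / a).toReal⌋₊ with hM
  have cardle : ∀ t : Finset (EuclideanSpace ℝ (Fin d)), (↑t : Set (EuclideanSpace ℝ (Fin d))) ⊆ N →
      ((↑t : Set (EuclideanSpace ℝ (Fin d))).Pairwise fun x y => 2 * ε ≤ dist x y) →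
      t.card ≤ M := by
    intro t h1 h2
    have h := cardbound t h1 h2
    have : (t.card : ℝ) ≤ (H / a).toReal := by
      have := ENNReal.toReal_mono hHa_lt.ne h
      simpa using this
    exact Nat.le_floor this
  -- the set of achievable cardinalities
  set S : Set ℕ := {n | ∃ t : Finset (EuclideanSpace ℝ (Fin d)),
      (↑t : Set (EuclideanSpace ℝ (Fin d))) ⊆ N ∧ ((↑t : Set (EuclideanSpace ℝ (Fin d))).Pairwise fun x y => 2 * ε ≤ dist x y) ∧ t.card = n}
    with hS
  have hS0 : 0 ∈ S := ⟨∅, by simp, by simp, by simp⟩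
  have hSbdd : BddAbove S := ⟨M, fun n hn => by
    obtain ⟨t, h1, h2, h3⟩ := hn; exact h3 ▸ cardle t h1 h2⟩
  have hmem : sSup S ∈ S := Nat.sSup_mem ⟨0, hS0⟩ hSbdd
  obtain ⟨t, hts, hsep, hcard⟩ := hmem
  -- maximality: every point of N is within 2ε of some point of t
  have hmax : ∀ x ∈ N, ∃ y ∈ t, dist x y < 2 * ε := by
    intro x hxN
    by_contra hcon
    push_neg at hcon
    have hxt : x ∉ t := fun hxt => by
      have := hcon x hxt
      simp at this
      nlinarith
    have hmem' : t.card + 1 ∈ S := by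
      refine ⟨insert x t, ?_, ?_, ?_⟩
      · intro z hz
        simp only [Finset.coe_insert, Set.mem_insert_iff] at hz
        rcases hz with rfl | hz
        · exact hxN
        · exact hts hz
      · intro u hu v hv huv
        simp only [Finset.coe_insert, Set.mem_insert_iff] at hu hv
        rcases hu with rfl | hu
        · rcases hv with rfl | hv
          · exact absurd rfl huv
          · exact hcon v hv
        · rcases hv with rfl | hv
          · rw [dist_comm]; exact hcon u hu
          · exact hsep hu hv huv
      · rw [Finset.card_insert_of_notMem hxt]
    have := le_csSup hSbdd hmem'
    omega
  -- covering of the neighborhood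
  have hcover : {p | ∃ q ∈ N, dist p q < ε} ⊆ ⋃ y ∈ t, ball y (3 * ε) := by
    intro p hp
    obtain ⟨q, hqN, hpq⟩ := hp
    obtain ⟨y, hyt, hqy⟩ := hmax q hqN
    simp only [Set.mem_iUnion]
    exact ⟨y, hyt, by rw [mem_ball]; calc dist p y ≤ dist p q + dist q y := dist_triangle _ _ _
      _ < 3 * ε := by linarith⟩
  set b : ℝ≥0∞ := ENNReal.ofReal (C₂ * (3 * ε) ^ (k + α)) with hb
  have hμU : μ {p | ∃ q ∈ N, dist p q < ε} ≤ (t.card : ℝ≥0∞) * b := by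
    calc μ {p | ∃ q ∈ N, dist p q < ε} ≤ μ (⋃ y ∈ t, ball y (3 * ε)) :=
          measure_mono hcover
      _ ≤ ∑ y ∈ t, μ (ball y (3 * ε)) := measure_biUnion_finset_le _ _
      _ ≤ ∑ _y ∈ t, b := Finset.sum_le_sum fun y hy => hμ y (hts hy)
      _ = (t.card : ℝ≥0∞) * b := by rw [Finset.sum_const, nsmul_eq_mul]
  -- final arithmetic
  have hreal : C₂ * (3 * ε) ^ (k + α) = (C₃ * ε ^ k) * (C₂ * 3 ^ (k + α) * ε ^ α / C₃) := by
    have h1 : (3 * ε) ^ (k + α) = 3 ^ (k + α) * ε ^ (k + α) :=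
      Real.mul_rpow (by norm_num) hε.le
    have h2 : ε ^ (k + α) = ε ^ k * ε ^ α := Real.rpow_add hε k α
    rw [h1, h2]
    field_simp
  have hbsplit : b = a * ENNReal.ofReal (C₂ * 3 ^ (k + α) * ε ^ α / C₃) := by
    rw [hb, hreal, ENNReal.ofReal_mul haR.le]
  have hdivsplit : ENNReal.ofReal (C₂ * 3 ^ (k + α) * ε ^ α / C₃)
      = ENNReal.ofReal (C₂ * 3 ^ (k + α) * ε ^ α) / ENNReal.ofReal C₃ :=
    ENNReal.ofReal_div_of_pos hC₃
  calc μ {p | ∃ q ∈ N, dist p q < ε} ≤ (t.card : ℝ≥0∞) * b := hμU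
    _ ≤ (H / a) * b := by
        exact mul_le_mul_left (cardbound t hts hsep) b
    _ = H * ENNReal.ofReal (C₂ * 3 ^ (k + α) * ε ^ α / C₃) := by
        rw [hbsplit, ← mul_assoc, ENNReal.div_mul_cancel ha0 haT]
    _ = H / ENNReal.ofReal C₃ * ENNReal.ofReal (C₂ * 3 ^ (k + α) * ε ^ α) := by
        rw [hdivsplit, div_eq_mul_inv, div_eq_mul_inv]
        ring
end

section
/- Let C > 0 and 0 < σ₀ ≤ 1/C. Let l : [0, σ₀) → ℝ be continuous with l(0) = 0, nonnegative, differentiable on (0, σ₀), and suppose that for every σ ∈ (0, σ₀) one has C·l(σ) < π/2 and l'(σ) ≤ 1/cos(C·l(σ)). Then for every σ ∈ [0, σ₀) one has sin(C·l(σ)) ≤ C·σ; equivalently, l(σ) ≤ (1/C)·arcsin(C·σ) whenever C·σ ≤ 1. -/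
open Real Set

/-- ODE comparison: if `l(0) = 0`, `l ≥ 0`, `C·l(σ) < π/2` and `l'(σ) ≤ 1/cos(C·l(σ))` on
`(0, σ₀)` with `0 < σ₀ ≤ 1/C`, then `sin(C·l(σ)) ≤ C·σ`, equivalently
`l(σ) ≤ (1/C)·arcsin(C·σ)` whenever `C·σ ≤ 1`. -/
theorem sin_of_length_le_of_deriv_le
    (C σ₀ : ℝ) (hC : 0 < C) (hσ₀ : 0 < σ₀) (hσ₀C : σ₀ ≤ 1 / C)
    (l : ℝ → ℝ)
    (hcont : ContinuousOn l (Ico 0 σ₀)) (hl0 : l 0 = 0)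
    (hnonneg : ∀ σ ∈ Ico (0 : ℝ) σ₀, 0 ≤ l σ)
    (hdiff : ∀ σ ∈ Ioo (0 : ℝ) σ₀, DifferentiableAt ℝ l σ)
    (hangle : ∀ σ ∈ Ioo (0 : ℝ) σ₀, C * l σ < π / 2)
    (hderiv : ∀ σ ∈ Ioo (0 : ℝ) σ₀, deriv l σ ≤ 1 / Real.cos (C * l σ)) :
    ∀ σ ∈ Ico (0 : ℝ) σ₀, Real.sin (C * l σ) ≤ C * σ ∧
      (C * σ ≤ 1 → l σ ≤ (1 / C) * Real.arcsin (C * σ)) := by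
  set g : ℝ → ℝ := fun σ => Real.sin (C * l σ) - C * σ with hg
  have hcos : ∀ σ ∈ Ioo (0 : ℝ) σ₀, 0 < Real.cos (C * l σ) := by
    intro σ hσ
    apply Real.cos_pos_of_mem_Ioo
    constructor
    · have : 0 ≤ C * l σ := mul_nonneg hC.le (hnonneg σ (Ioo_subset_Ico_self hσ))
      linarith [Real.pi_pos]
    · exact hangle σ hσ
  have hgd : ∀ σ ∈ Ioo (0 : ℝ) σ₀,
      HasDerivAt g (Real.cos (C * l σ) * (C * deriv l σ) - C) σ := by
    intro σ hσ
    have h1 : HasDerivAt (fun σ => C * l σ) (C * deriv l σ) σ :=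
      ((hdiff σ hσ).hasDerivAt).const_mul C
    have h2 := (Real.hasDerivAt_sin (C * l σ)).comp σ h1
    have h3 : HasDerivAt (fun σ : ℝ => C * σ) C σ := by
      simpa using (hasDerivAt_id σ).const_mul C
    exact h2.sub h3
  have hanti : AntitoneOn g (Ico 0 σ₀) := by
    have hconvex : Convex ℝ (Ico (0 : ℝ) σ₀) := convex_Ico 0 σ₀
    have hgcont : ContinuousOn g (Ico 0 σ₀) := by
      apply ContinuousOn.sub
      · exact Real.continuous_sin.comp_continuousOn (continuousOn_const.mul hcont)
      · exact (continuous_const.mul continuous_id).continuousOn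
    have hint : interior (Ico (0 : ℝ) σ₀) = Ioo 0 σ₀ := interior_Ico
    apply antitoneOn_of_deriv_nonpos hconvex hgcont
    · rw [hint]
      intro σ hσ
      exact (hgd σ hσ).differentiableAt.differentiableWithinAt
    · rw [hint]
      intro σ hσ
      rw [(hgd σ hσ).deriv]
      have hcs := hcos σ hσ
      have h := hderiv σ hσ
      have : Real.cos (C * l σ) * (C * deriv l σ) ≤
          Real.cos (C * l σ) * (C * (1 / Real.cos (C * l σ))) := by
        apply mul_le_mul_of_nonneg_left _ hcs.le
        exact mul_le_mul_of_nonneg_left h hC.le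
      have heq : Real.cos (C * l σ) * (C * (1 / Real.cos (C * l σ))) = C := by
        field_simp
      linarith
  intro σ hσ
  have hsin : Real.sin (C * l σ) ≤ C * σ := by
    have h0 : (0 : ℝ) ∈ Ico (0 : ℝ) σ₀ := ⟨le_refl 0, hσ₀⟩
    have := hanti h0 hσ hσ.1
    simp only [hg, hl0, mul_zero, Real.sin_zero] at this
    linarith
  refine ⟨hsin, fun hle => ?_⟩
  have hlb : -(π / 2) ≤ C * l σ := by
    have : 0 ≤ C * l σ := mul_nonneg hC.le (hnonneg σ hσ)
    linarith [Real.pi_pos]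
  have hub : C * l σ ≤ π / 2 := by
    rcases eq_or_lt_of_le hσ.1 with h | h
    · simp [← h, hl0]
      positivity
    · exact (hangle σ ⟨h, hσ.2⟩).le
  have harc : C * l σ = Real.arcsin (Real.sin (C * l σ)) :=
    (Real.arcsin_sin hlb hub).symm
  have hmono : Real.arcsin (Real.sin (C * l σ)) ≤ Real.arcsin (C * σ) :=
    Real.monotone_arcsin hsin
  have hkey : C * l σ ≤ Real.arcsin (C * σ) := harc ▸ hmono
  calc l σ = (1 / C) * (C * l σ) := by field_simp
    _ ≤ (1 / C) * Real.arcsin (C * σ) :=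
      mul_le_mul_of_nonneg_left hkey (by positivity)
end
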